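/- arXiv:2401.08203 — 5 statements merged into one kernel-verified Lean document; each statement's English description precedes it below -/
import Mathlib

section
/- Let H be a κ-monoid for an infinite cardinal κ. Then the summation is commutative: for every family (x_i)_{i ∈ κ} in H and every bijection π : κ → κ, we have Σ_{i ∈ κ} x_i = Σ_{i ∈ κ} x_{π(i)}. -/
/-!
Fix a bijection `e : ι × ι ≃ ι` (it exists since `ι` is infinite) and place the family `x` in
the column `j = base` of a doubly indexed family. By (A1) every row sums to its single entry,
so (A2) expresses `Σ x` as the sum of the family that is `x (e⁻¹ k).1` at the `k` with
`(e⁻¹ k).2 = base` and `0` elsewhere, for every bijection `e`. Using `e` for `x` and `e ∘ (π × id)` for `x ∘ π` yields the same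
family.
-/

open scoped Classical

universe u v w

/-- A κ-monoid (Definition 2.1 of the paper), with the index cardinal κ modelled
by an (infinite) index type `ι`.  `base` plays the role of the element `0 ∈ κ`. -/
structure KappaMonoid (ι : Type u) (H : Type v) where
  zero : H
  base : ι
  sum : (ι → H) → H
  /-- (A1) -/
  sum_single : ∀ x : ι → H, (∀ i, i ≠ base → x i = zero) → sum x = x base
  /-- (A2) -/
  sum_flatten : ∀ (x : ι × ι → H) (π : ι × ι ≃ ι),
    sum (fun i => sum fun j => x (i, j)) = sum fun k => x (π.symm k)

namespace KappaMonoid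

variable {ι : Type u} {H : Type v}

/-- The family with value `a` at `i`, `b` at `j`, and `0` elsewhere. -/
noncomputable def pairFam (M : KappaMonoid ι H) (i j : ι) (a b : H) : ι → H :=
  fun k => if k = i then a else if k = j then b else M.zero

/-- The induced binary addition `a + b` on a κ-monoid. -/
noncomputable def add [Nontrivial ι] (M : KappaMonoid ι H) (a b : H) : H :=
  M.sum (M.pairFam M.base (Classical.choose (exists_ne M.base)) a b)

/-- `α·a`, where the cardinal `α` is realized as the cardinality of `s ⊆ ι`:
the κ-sum of the family equal to `a` on `s` and `0` elsewhere. -/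
noncomputable def smulSet (M : KappaMonoid ι H) (s : Set ι) (a : H) : H :=
  M.sum fun i => if i ∈ s then a else M.zero

/-- The κ-sum of the subfamily of `x` supported on `s` (padding by `0`). -/
noncomputable def sumOn (M : KappaMonoid ι H) (s : Set ι) (x : ι → H) : H :=
  M.sum fun i => if i ∈ s then x i else M.zero

end KappaMonoid

theorem nonempty_prod_self_equiv {ι : Type u} [Infinite ι] : Nonempty (ι × ι ≃ ι) := by
  rw [← Cardinal.eq, Cardinal.mk_prod, Cardinal.lift_id,
    Cardinal.mul_eq_self (Cardinal.aleph0_le_mk ι)]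

namespace KappaMonoid

variable {ι : Type u} {H : Type v} (M : KappaMonoid ι H)

theorem sum_ite_eq_base (a : H) : M.sum (fun j => if j = M.base then a else M.zero) = a := by
  simpa using M.sum_single (fun j => if j = M.base then a else M.zero) fun _ hj => if_neg hj

theorem sum_eq_sum_column (x : ι → H) (e : ι × ι ≃ ι) :
    M.sum x =
      M.sum fun k => if (e.symm k).2 = M.base then x (e.symm k).1 else M.zero := by
  have hrows := M.sum_flatten (fun p => if p.2 = M.base then x p.1 else M.zero) e
  simp only [sum_ite_eq_base] at hrows
  exact hrows

end KappaMonoid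

theorem kappaMonoid_sum_comm {ι : Type u} {H : Type v} [Infinite ι]
    (M : KappaMonoid ι H) (x : ι → H) (π : ι ≃ ι) :
    M.sum x = M.sum fun i => x (π i) := by
  obtain ⟨e⟩ := nonempty_prod_self_equiv (ι := ι)
  rw [M.sum_eq_sum_column x e,
    M.sum_eq_sum_column (fun i => x (π i)) ((π.prodCongr (Equiv.refl ι)).trans e)]
  simp
end

section
/- Let κ be an infinite cardinal and B a set. Let F_κ(B) be the set of families x ∈ F_κ^B (where F_κ is the set of cardinals ≤ κ) with support of cardinality ≤ κ, with coordinatewise cardinal summation. Then F_κ(B) is the free κ-monoid on B: for every κ-monoid H and every function f : B → H, there is a unique κ-homomorphism F_κ(B) → H extending f (via the canonical embedding of B as indicator families). -/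
open scoped Classical

universe u v w

/-- The carrier of `F_κ(B)`: families of cardinals `≤ κ = #ι` indexed by `B` whose
support has cardinality `≤ κ`. -/
def FreeKappaCarrier (ι B : Type u) : Type (u + 1) :=
  {f : B → Cardinal.{u} //
    (∀ b, f b ≤ Cardinal.mk ι) ∧ Cardinal.mk {b | f b ≠ 0} ≤ Cardinal.mk ι}

/-- The canonical embedding `ι : B → F_κ(B)`, sending `b` to the indicator family. -/
noncomputable def freeKappaIncl (ι B : Type u) [Infinite ι] (b : B) :
    FreeKappaCarrier ι B :=
  ⟨fun b' => if b' = b then 1 else 0, by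
    constructor
    · intro b'
      dsimp only
      split
      · exact Cardinal.one_le_iff_ne_zero.mpr (Cardinal.mk_ne_zero ι)
      · exact zero_le
    · refine le_trans (Cardinal.mk_le_mk_of_subset (t := {b}) ?_) ?_
      · intro b' hb'
        simp only [Set.mem_setOf_eq] at hb'
        by_contra hne
        simp only [Set.mem_singleton_iff] at hne
        rw [if_neg hne] at hb'
        exact hb' rfl
      · rw [Cardinal.mk_singleton]
        exact Cardinal.one_le_iff_ne_zero.mpr (Cardinal.mk_ne_zero ι)⟩

/-- A κ-homomorphism: a map preserving the neutral element and κ-indexed sums. -/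
def IsKappaHom {ι : Type u} {H : Type v} {K : Type w}
    (M : KappaMonoid ι H) (N : KappaMonoid ι K) (φ : H → K) : Prop :=
  φ M.zero = N.zero ∧ ∀ x : ι → H, φ (M.sum x) = N.sum fun i => φ (x i)

/-!
An element `x` of `F_κ(B)` counts, for each `b`, a set of `x b` copies of `b`: a `B`-labelled
set `x.Tokens` of size at most `κ`. The extension of `f` sends `x` to the κ-sum of the labels
`f b` laid out in `ι` along some embedding of `x.Tokens`, with `0` elsewhere. By A1 and A2 such
a sum does not depend on the embedding: A2 holds for every bijection `ι × ι ≃ ι`, and after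
padding a family into a single column of `ι × ι` (whose complement still has size `κ`) any two
embeddings differ by a permutation of `ι × ι`. Additivity is then the fact that κ-sums in
`F_κ(B)` are disjoint unions of labelled sets, and uniqueness holds because every `x` is the
κ-sum of the generators indexed by its tokens.
-/

namespace Cardinal

variable {α β : Type u}

theorem sum_subtype_eq_sum {p : α → Prop} (f : α → Cardinal.{u})
    (hf : ∀ a, f a ≠ 0 → p a) : sum (fun a : Subtype p => f a) = sum f :=
  mk_congr <| Equiv.sigmaSubtypeEquivOfSubset _ p fun a x =>
    hf a (mk_out (f a) ▸ mk_ne_zero_iff.mpr ⟨x⟩)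

theorem sum_eq_single (f : α → Cardinal.{u}) (a₀ : α) (hf : ∀ a, a ≠ a₀ → f a = 0) :
    sum f = f a₀ := by
  rw [← sum_subtype_eq_sum (p := (· = a₀)) f fun a ha => by_contra fun h => ha (hf a h)]
  exact (mk_congr (Equiv.uniqueSigma _)).trans (mk_out _)

theorem sum_comp_equiv (e : α ≃ β) (f : β → Cardinal.{u}) : sum (f ∘ e) = sum f :=
  mk_sigma_congr e fun _ => rfl

theorem sum_prod (f : α × β → Cardinal.{u}) :
    (sum fun a => sum fun b => f (a, b)) = sum f :=
  (mk_sigma _).symm.trans (mk_congr Equiv.sigmaAssocProd.symm)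

theorem sum_extend_zero (e : α ↪ β) (f : α → Cardinal.{u}) :
    sum (Function.extend e f 0) = sum f := by
  rw [← sum_subtype_eq_sum (p := (· ∈ Set.range e)) (Function.extend e f 0) fun b hb =>
    by_contra fun h => hb (Function.extend_apply' _ _ _ fun ⟨a, ha⟩ => h ⟨a, ha⟩),
    ← sum_comp_equiv (Equiv.ofInjective e e.injective).symm f]
  congr 1
  funext b
  obtain ⟨_, a, rfl⟩ := b
  simp [e.injective.extend_apply]

theorem sum_le_of_forall_le (f : α → Cardinal.{u}) {c : Cardinal.{u}}
    (hc : ℵ₀ ≤ c) (hα : #α ≤ c) (hf : ∀ a, f a ≤ c) : sum f ≤ c :=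
  calc sum f ≤ sum fun _ : α => c := sum_le_sum _ _ hf
    _ = #α * c := sum_const' _ _
    _ ≤ c * c := by gcongr
    _ = c := mul_eq_self hc

theorem nonempty_prod_self_equiv (ι : Type u) [Infinite ι] : Nonempty (ι × ι ≃ ι) :=
  Cardinal.eq.mp (by simp [mul_eq_self (aleph0_le_mk ι)])

theorem mk_compl_of_forall_snd_eq {ι : Type u} [Infinite ι] {s : Set (ι × ι)} (b : ι)
    (hs : ∀ p ∈ s, p.2 = b) : #(sᶜ : Set (ι × ι)) = #(ι × ι) := by
  refine le_antisymm (mk_set_le _) ?_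
  have hb : #({b}ᶜ : Set ι) = #ι :=
    mk_compl_of_infinite _ (by simpa using one_lt_aleph0.trans_le (aleph0_le_mk ι))
  calc #(ι × ι) = #(ι × ({b}ᶜ : Set ι)) := by simp [hb]
    _ ≤ #(sᶜ : Set (ι × ι)) :=
      mk_le_of_injective (f := fun p => ⟨(p.1, p.2.1), fun h => p.2.2 (hs _ h)⟩)
        fun p q h => by simpa [Prod.ext_iff, Subtype.ext_iff] using h

end Cardinal

open Cardinal in
theorem Function.Embedding.exists_perm_apply_eq {X A : Type*} (f f' : A ↪ X)
    (h : #((Set.range f)ᶜ : Set X) = #((Set.range f')ᶜ : Set X)) :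
    ∃ σ : Equiv.Perm X, ∀ a, σ (f a) = f' a := by
  obtain ⟨σ, hσ⟩ := extend_function ((Equiv.ofInjective f f.injective).symm.toEmbedding.trans f')
    (by rwa [Function.Embedding.coe_trans, Equiv.coe_toEmbedding, EquivLike.range_comp,
      ← Cardinal.eq])
  exact ⟨σ, fun a => by simpa using hσ ⟨f a, a, rfl⟩⟩

namespace KappaMonoid

variable {ι : Type u} {H : Type v} (M : KappaMonoid ι H)

noncomputable def extendByZero {A : Type*} (e : A ↪ ι) (v : A → H) : ι → H :=
  Function.extend e v fun _ => M.zero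

section extendByZero

variable {A : Type*} (e : A ↪ ι) (v : A → H)

@[simp]
theorem extendByZero_apply (a : A) : M.extendByZero e v (e a) = v a :=
  e.injective.extend_apply _ _ _

theorem extendByZero_of_notMem {i : ι} (hi : i ∉ Set.range e) :
    M.extendByZero e v i = M.zero :=
  Function.extend_apply' _ _ _ fun ⟨a, ha⟩ => hi ⟨a, ha⟩

theorem eq_extendByZero {w : ι → H} (hw : ∀ a, w (e a) = v a)
    (hw₀ : ∀ i ∉ Set.range e, w i = M.zero) : w = M.extendByZero e v := by
  funext i
  by_cases hi : i ∈ Set.range e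
  · obtain ⟨a, rfl⟩ := hi
    simp [hw]
  · rw [hw₀ i hi, M.extendByZero_of_notMem e v hi]

theorem extendByZero_trans (f : ι ↪ ι) :
    M.extendByZero (e.trans f) v = M.extendByZero f (M.extendByZero e v) := by
  refine (M.eq_extendByZero _ _ (fun a => by simp) fun i hi => ?_).symm
  by_cases hf : i ∈ Set.range f
  · obtain ⟨j, rfl⟩ := hf
    rw [extendByZero_apply]
    exact M.extendByZero_of_notMem e v fun ⟨a, ha⟩ => hi ⟨a, by simp [ha]⟩
  · exact M.extendByZero_of_notMem f _ hf

theorem extendByZero_equiv_trans {A' : Type*} (g : A' ≃ A) :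
    M.extendByZero (g.toEmbedding.trans e) (v ∘ g) = M.extendByZero e v :=
  (M.eq_extendByZero _ _ (fun a => by simp) fun _ hi =>
    M.extendByZero_of_notMem e v fun ⟨a, ha⟩ => hi ⟨g.symm a, by simp [ha]⟩).symm

end extendByZero

theorem sum_const_zero : M.sum (fun _ => M.zero) = M.zero :=
  M.sum_single _ fun _ _ => rfl

theorem sum_extendByZero_of_isEmpty {A : Type*} [IsEmpty A] (e : A ↪ ι) (v : A → H) :
    M.sum (M.extendByZero e v) = M.zero := by
  rw [← M.sum_const_zero]
  congr 1
  funext i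
  exact M.extendByZero_of_notMem e v fun ⟨a, _⟩ => isEmptyElim a

theorem sum_extendByZero_sectL_trans (π : ι × ι ≃ ι) (y : ι → H) :
    M.sum (M.extendByZero ((Function.Embedding.sectL ι M.base).trans π.toEmbedding) y) =
      M.sum y := by
  set x : ι × ι → H := fun p => if p.2 = M.base then y p.1 else M.zero
  have hrow : ∀ i, M.sum (fun j => x (i, j)) = y i := fun i =>
    (M.sum_single _ fun j hj => if_neg hj).trans (if_pos rfl)
  have hpad : M.extendByZero ((Function.Embedding.sectL ι M.base).trans π.toEmbedding) y =
      fun k => x (π.symm k) := by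
    refine (M.eq_extendByZero _ _ (fun i => by simp) fun k hk => if_neg fun hb => hk ?_).symm
    exact ⟨(π.symm k).1, by simp [← hb]⟩
  rw [hpad, ← M.sum_flatten x π]
  exact congrArg M.sum (funext hrow)

variable [Infinite ι]

theorem sum_extendByZero_eq_of_embedding {A : Type*} (e e' : A ↪ ι) (v : A → H) :
    M.sum (M.extendByZero e v) = M.sum (M.extendByZero e' v) := by
  obtain ⟨π⟩ := Cardinal.nonempty_prod_self_equiv ι
  set s := Function.Embedding.sectL ι M.base
  obtain ⟨ρ, hρ⟩ := (e.trans s).exists_perm_apply_eq (e'.trans s) <| by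
    rw [Cardinal.mk_compl_of_forall_snd_eq M.base (by simp [s]),
      Cardinal.mk_compl_of_forall_snd_eq M.base (by simp [s])]
  have hcol : e.trans (s.trans π.toEmbedding) =
      e'.trans (s.trans (ρ.symm.trans π).toEmbedding) := by
    ext a
    simp only [Function.Embedding.trans_apply, Equiv.coe_toEmbedding, Equiv.trans_apply]
    rw [← Function.Embedding.trans_apply e' s, ← hρ, Equiv.symm_apply_apply]
    rfl
  rw [← M.sum_extendByZero_sectL_trans π, ← M.extendByZero_trans, hcol, M.extendByZero_trans,
    M.sum_extendByZero_sectL_trans]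

theorem sum_extendByZero_of_subsingleton {A : Type*} [Subsingleton A] (e : A ↪ ι) (v : A → H)
    (a : A) : M.sum (M.extendByZero e v) = v a := by
  rw [M.sum_extendByZero_eq_of_embedding e ⟨fun _ => M.base, fun _ _ _ => Subsingleton.elim _ _⟩]
  refine (M.sum_single _ fun i hi => M.extendByZero_of_notMem _ _ ?_).trans
    (M.extendByZero_apply _ _ a)
  rintro ⟨_, rfl⟩
  exact hi rfl

theorem sum_sum_extendByZero {A : ι → Type*} (e : ∀ i, A i ↪ ι) (v : ∀ i, A i → H)
    (E : (Σ i, A i) ↪ ι) :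
    M.sum (fun i => M.sum (M.extendByZero (e i) (v i))) =
      M.sum (M.extendByZero E fun a => v a.1 a.2) := by
  obtain ⟨π⟩ := Cardinal.nonempty_prod_self_equiv ι
  set x : ι × ι → H := fun p => M.extendByZero (e p.1) (v p.1) p.2
  set E₀ : (Σ i, A i) ↪ ι := (Function.Embedding.sigmaMap (Function.Embedding.refl ι) e).trans
    ((Equiv.sigmaEquivProd ι ι).trans π).toEmbedding
  have hx : (fun k => x (π.symm k)) = M.extendByZero E₀ fun a => v a.1 a.2 := by
    refine M.eq_extendByZero _ _ (fun ⟨i, a⟩ => by simp [x, E₀, Sigma.map]) fun k hk => ?_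
    refine M.extendByZero_of_notMem _ _ fun ⟨a, ha⟩ => hk ⟨⟨(π.symm k).1, a⟩, ?_⟩
    simp [E₀, ha, Sigma.map]
  rw [M.sum_flatten x π, hx]
  exact M.sum_extendByZero_eq_of_embedding _ _ _

end KappaMonoid

theorem IsKappaHom.map_sum_extendByZero {ι : Type u} {H : Type v} {K : Type w}
    {M : KappaMonoid ι H} {N : KappaMonoid ι K} {φ : H → K} (hφ : IsKappaHom M N φ)
    {A : Type*} (e : A ↪ ι) (v : A → H) :
    φ (M.sum (M.extendByZero e v)) = N.sum (N.extendByZero e (φ ∘ v)) := by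
  rw [hφ.2]
  exact congrArg N.sum <| N.eq_extendByZero _ _ (fun a => by simp) fun i hi => by
    rw [M.extendByZero_of_notMem e v hi, hφ.1]

def Equiv.sigmaComm {α β : Type*} (γ : α → β → Type*) :
    (Σ a, Σ b, γ a b) ≃ Σ b, Σ a, γ a b where
  toFun x := ⟨x.2.1, x.1, x.2.2⟩
  invFun x := ⟨x.2.1, x.1, x.2.2⟩
  left_inv _ := rfl
  right_inv _ := rfl

open Cardinal

namespace FreeKappaCarrier

variable {ι B : Type u}

def Tokens (x : FreeKappaCarrier ι B) : Type u :=
  Σ b, (x.1 b).out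

theorem Tokens.ne_zero {x : FreeKappaCarrier ι B} (t : x.Tokens) : x.1 t.1 ≠ 0 :=
  mk_out (x.1 t.1) ▸ mk_ne_zero_iff.mpr ⟨t.2⟩

variable [Infinite ι]

theorem mk_tokens_le (x : FreeKappaCarrier ι B) : #x.Tokens ≤ #ι :=
  calc #x.Tokens = sum x.1 := rfl
    _ = sum fun b : {b // x.1 b ≠ 0} => x.1 b := (sum_subtype_eq_sum _ fun _ => id).symm
    _ ≤ #ι := sum_le_of_forall_le _ (aleph0_le_mk ι) x.2.2 fun b => x.2.1 b

noncomputable def tokenEmbedding (x : FreeKappaCarrier ι B) : x.Tokens ↪ ι :=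
  Classical.choice ((le_def _ _).mp x.mk_tokens_le)

theorem mk_setOf_sum_ne_zero_le (X : ι → FreeKappaCarrier ι B) :
    #{b | (sum fun i => (X i).1 b) ≠ 0} ≤ #ι := by
  have hsub : {b | (sum fun i => (X i).1 b) ≠ 0} ⊆ ⋃ i, {b | (X i).1 b ≠ 0} := by
    intro b hb
    by_contra h
    simp_all
  calc #{b | (sum fun i => (X i).1 b) ≠ 0} ≤ #(⋃ i, {b | (X i).1 b ≠ 0}) :=
        mk_le_mk_of_subset hsub
    _ ≤ sum fun i => #{b | (X i).1 b ≠ 0} := mk_iUnion_le_sum_mk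
    _ ≤ #ι := sum_le_of_forall_le _ (aleph0_le_mk ι) le_rfl fun i => (X i).2.2

end FreeKappaCarrier

open FreeKappaCarrier

noncomputable def freeKappaMonoid (ι B : Type u) [Infinite ι] :
    KappaMonoid ι (FreeKappaCarrier ι B) where
  zero := ⟨fun _ => 0, fun _ => zero_le, by simp⟩
  base := Classical.arbitrary ι
  sum X := ⟨fun b => sum fun i => (X i).1 b,
    fun b => sum_le_of_forall_le _ (aleph0_le_mk ι) le_rfl fun i => (X i).2.1 b,
    mk_setOf_sum_ne_zero_le X⟩
  sum_single X hX := Subtype.ext <| funext fun b =>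
    sum_eq_single _ _ fun i hi => by rw [hX i hi]
  sum_flatten X π := Subtype.ext <| funext fun b =>
    (sum_prod fun p => (X p).1 b).trans (sum_comp_equiv π.symm fun p => (X p).1 b).symm

namespace FreeKappaCarrier

variable {ι B : Type u} [Infinite ι]

noncomputable def tokensSumEquiv (X : ι → FreeKappaCarrier ι B) :
    (Σ i, (X i).Tokens) ≃ ((freeKappaMonoid ι B).sum X).Tokens :=
  (Equiv.sigmaComm _).trans
    (Equiv.sigmaCongrRight fun b => (outMkEquiv (α := Σ i, ((X i).1 b).out)).symm)

theorem sum_extendByZero_apply {A : Type u} (e : A ↪ ι) (w : A → FreeKappaCarrier ι B)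
    (b : B) :
    ((freeKappaMonoid ι B).sum ((freeKappaMonoid ι B).extendByZero e w)).1 b =
      sum fun a => (w a).1 b := by
  rw [← sum_extend_zero e]
  exact congrArg sum <| funext <|
    Function.apply_extend (g := w) (fun x : FreeKappaCarrier ι B => x.1 b) e _

theorem sum_extendByZero_incl_tokens (x : FreeKappaCarrier ι B) :
    (freeKappaMonoid ι B).sum
      ((freeKappaMonoid ι B).extendByZero x.tokenEmbedding fun t => freeKappaIncl ι B t.1) =
      x := by
  refine Subtype.ext (funext fun b => ?_)
  rw [sum_extendByZero_apply]
  calc (sum fun t : x.Tokens => (freeKappaIncl ι B t.1).1 b)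
      = sum fun t : {t : x.Tokens // t.1 = b} => (freeKappaIncl ι B t.1.1).1 b :=
        (sum_subtype_eq_sum _ fun t ht => by_contra fun h => ht (if_neg (Ne.symm h))).symm
    _ = sum fun _ : {t : x.Tokens // t.1 = b} => 1 :=
        congrArg sum (funext fun t => if_pos t.2.symm)
    _ = #{t : x.Tokens // t.1 = b} := by simp
    _ = x.1 b := (mk_congr (Equiv.sigmaSubtype b)).trans (mk_out _)

variable {H : Type v} (M : KappaMonoid ι H) (f : B → H)

noncomputable def lift (x : FreeKappaCarrier ι B) : H :=
  M.sum (M.extendByZero x.tokenEmbedding fun t => f t.1)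

theorem lift_incl (b : B) : lift M f (freeKappaIncl ι B b) = f b := by
  have hlabel (t : (freeKappaIncl ι B b).Tokens) : t.1 = b :=
    by_contra fun h => t.ne_zero (if_neg h)
  have hcard : #(freeKappaIncl ι B b).Tokens = 1 :=
    (sum_eq_single _ b fun _ h => if_neg h).trans (if_pos rfl)
  obtain ⟨_, ⟨t⟩⟩ := eq_one_iff_unique.mp hcard
  rw [lift, M.sum_extendByZero_of_subsingleton _ _ t, hlabel t]

theorem lift_zero : lift M f (freeKappaMonoid ι B).zero = M.zero :=
  have : IsEmpty (freeKappaMonoid ι B).zero.Tokens := ⟨fun t => t.ne_zero rfl⟩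
  M.sum_extendByZero_of_isEmpty _ _

theorem lift_sum (X : ι → FreeKappaCarrier ι B) :
    lift M f ((freeKappaMonoid ι B).sum X) = M.sum fun i => lift M f (X i) := by
  simp only [lift]
  rw [M.sum_sum_extendByZero _ _ ((tokensSumEquiv X).toEmbedding.trans (tokenEmbedding _))]
  exact congrArg M.sum (M.extendByZero_equiv_trans _ (fun t : Tokens _ => f t.1) _).symm

theorem isKappaHom_lift : IsKappaHom (freeKappaMonoid ι B) M (lift M f) :=
  ⟨lift_zero M f, lift_sum M f⟩

theorem eq_lift_of_isKappaHom {ψ : FreeKappaCarrier ι B → H}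
    (hψ : IsKappaHom (freeKappaMonoid ι B) M ψ) (hψf : ∀ b, ψ (freeKappaIncl ι B b) = f b) :
    ψ = lift M f := by
  funext x
  rw [← sum_extendByZero_incl_tokens x, hψ.map_sum_extendByZero, sum_extendByZero_incl_tokens]
  simp only [Function.comp_def, hψf, lift]

end FreeKappaCarrier

/-- Proposition 2.11: `F_κ(B)`, with coordinatewise cardinal summation, is the free
κ-monoid on `B`: for every κ-monoid `H` and map `f : B → H` there is a unique
κ-homomorphism `F_κ(B) → H` extending `f` along the canonical embedding. -/
theorem freeKappaMonoid_universal (ι B : Type u) [Infinite ι] :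
    ∃ F : KappaMonoid ι (FreeKappaCarrier ι B),
      F.zero.1 = (fun _ => 0) ∧
      (∀ (x : ι → FreeKappaCarrier ι B) (b : B),
        (F.sum x).1 b = Cardinal.sum fun i => (x i).1 b) ∧
      ∀ (H : Type w) (M : KappaMonoid ι H) (f : B → H),
        ∃! φ : FreeKappaCarrier ι B → H,
          IsKappaHom F M φ ∧ ∀ b, φ (freeKappaIncl ι B b) = f b :=
  ⟨freeKappaMonoid ι B, rfl, fun _ _ => rfl, fun _ M f => ⟨lift M f,
    ⟨isKappaHom_lift M f, lift_incl M f⟩, fun _ hψ => eq_lift_of_isKappaHom M f hψ.1 hψ.2⟩⟩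
end

section
/- In the monoid (ℕ, +), two families (a_i)_{i∈ℕ} and (b_i)_{i∈ℕ} of natural numbers are ℵ₀⁻-braided if and only if either (both have finite support and equal sums) or (both have infinite support). -/
open Finset Function

lemma exists_block {f : ℕ → ℕ} (hf : (Function.support f).Infinite) (p c : ℕ) :
    ∃ m, p < m ∧ c ≤ ∑ i ∈ Finset.Ico p m, f i := by
  have hinf : (Function.support f \ Set.Iio p).Infinite := hf.diff (Set.finite_Iio p)
  obtain ⟨t, hts, htc⟩ := hinf.exists_subset_card_eq c
  refine ⟨max (p+1) (t.sup id + 1), lt_of_lt_of_le (Nat.lt_succ_self p) (le_max_left _ _), ?_⟩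
  have hsub : t ⊆ Finset.Ico p (max (p+1) (t.sup id + 1)) := by
    intro x hx
    have hx' := hts hx
    simp only [Set.mem_diff, Set.mem_Iio, not_lt] at hx'
    refine Finset.mem_Ico.mpr ⟨hx'.2, ?_⟩
    have : x ≤ t.sup id := Finset.le_sup (f := id) hx
    omega
  calc c = t.card := htc.symm
    _ = ∑ _x ∈ t, 1 := by simp
    _ ≤ ∑ x ∈ t, f x := Finset.sum_le_sum (fun x hx =>
        Nat.one_le_iff_ne_zero.mpr (Function.mem_support.mp ((hts hx).1)))
    _ ≤ _ := Finset.sum_le_sum_of_subset hsub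

lemma blocks_eventually_zero {f : ℕ → ℕ} (hf : (Function.support f).Finite)
    (I : ℕ → Finset ℕ) (hdis : ∀ μ ν, μ ≠ ν → Disjoint (I μ) (I ν))
    (hcov : ∀ n, ∃ μ, n ∈ I μ) :
    ∃ N, ∀ μ, N ≤ μ → ∑ i ∈ I μ, f i = 0 := by
  classical
  choose φ hφ using hcov
  refine ⟨(hf.toFinset.sup φ) + 1, fun μ hμ => Finset.sum_eq_zero fun i hi => ?_⟩
  by_contra h
  have hi' : i ∈ hf.toFinset := by simpa [Function.mem_support] using h
  have hne : φ i ≠ μ := by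
    have := Finset.le_sup (f := φ) hi'
    omega
  exact (Finset.disjoint_left.mp (hdis (φ i) μ hne) (hφ i)) hi

lemma finsum_blocks {f : ℕ → ℕ} (I : ℕ → Finset ℕ)
    (hdis : ∀ μ ν, μ ≠ ν → Disjoint (I μ) (I ν)) (hcov : ∀ n, ∃ μ, n ∈ I μ)
    {N : ℕ} (hN : ∀ μ, N ≤ μ → ∑ i ∈ I μ, f i = 0) :
    (Function.support f).Finite ∧ ∑ᶠ i, f i = ∑ μ ∈ Finset.range N, ∑ i ∈ I μ, f i := by
  classical
  have hsub : Function.support f ⊆ ↑((Finset.range N).biUnion I) := by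
    intro i hi
    obtain ⟨μ, hμ⟩ := hcov i
    have hμN : μ < N := by
      by_contra h
      have h0 := hN μ (le_of_not_gt h)
      have : f i = 0 := by
        by_contra hfi
        have := Finset.sum_eq_zero_iff.mp h0 i hμ
        exact hfi this
      exact hi this
    simp only [Finset.coe_biUnion, Finset.coe_range, Set.mem_iUnion, Set.mem_Iio,
      Finset.mem_coe]
    exact ⟨μ, hμN, hμ⟩
  refine ⟨Set.Finite.subset (Finset.finite_toSet _) hsub, ?_⟩
  rw [finsum_eq_sum_of_support_subset f hsub]
  exact Finset.sum_biUnion (fun μ _ ν _ hne => hdis μ ν hne)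

lemma cover_of_strictMono {p : ℕ → ℕ} (h0 : p 0 = 0) (hp : ∀ μ, p μ < p (μ+1)) (n : ℕ) :
    ∃ μ, n ∈ Finset.Ico (p μ) (p (μ+1)) := by
  classical
  have hle : ∀ k, k ≤ p k := by
    intro k; induction k with
    | zero => omega
    | succ k ih => have := hp k; omega
  have hP0 : p 0 ≤ n := by omega
  have h1 : p (Nat.findGreatest (fun k => p k ≤ n) n) ≤ n :=
    Nat.findGreatest_spec (P := fun k => p k ≤ n) (Nat.zero_le n) hP0
  refine ⟨Nat.findGreatest (fun k => p k ≤ n) n, Finset.mem_Ico.mpr ⟨h1, ?_⟩⟩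
  by_contra h
  push_neg at h
  have hb : Nat.findGreatest (fun k => p k ≤ n) n + 1 ≤ n := by
    have := hle (Nat.findGreatest (fun k => p k ≤ n) n + 1)
    omega
  exact Nat.findGreatest_is_greatest (Nat.lt_succ_self _) hb h

noncomputable def braidStep (a b : ℕ → ℕ) (ha : (Function.support a).Infinite)
    (hb : (Function.support b).Infinite) (s : ℕ × ℕ × ℕ) : ℕ × ℕ × ℕ :=
  ((exists_block ha s.1 s.2.2).choose,
   (exists_block hb s.2.1
      ((∑ i ∈ Finset.Ico s.1 (exists_block ha s.1 s.2.2).choose, a i) - s.2.2)).choose,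
   (∑ j ∈ Finset.Ico s.2.1 (exists_block hb s.2.1
        ((∑ i ∈ Finset.Ico s.1 (exists_block ha s.1 s.2.2).choose, a i) - s.2.2)).choose, b j)
     - ((∑ i ∈ Finset.Ico s.1 (exists_block ha s.1 s.2.2).choose, a i) - s.2.2))

lemma braidStep_spec (a b : ℕ → ℕ) (ha : (Function.support a).Infinite)
    (hb : (Function.support b).Infinite) (s : ℕ × ℕ × ℕ) :
    s.1 < (braidStep a b ha hb s).1 ∧ s.2.1 < (braidStep a b ha hb s).2.1 ∧
    ∃ u, (∑ i ∈ Finset.Ico s.1 (braidStep a b ha hb s).1, a i = s.2.2 + u) ∧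
      (∑ j ∈ Finset.Ico s.2.1 (braidStep a b ha hb s).2.1, b j
        = (braidStep a b ha hb s).2.2 + u) := by
  simp only [braidStep]
  obtain ⟨h1, h2⟩ := (exists_block ha s.1 s.2.2).choose_spec
  obtain ⟨h3, h4⟩ := (exists_block hb s.2.1
      ((∑ i ∈ Finset.Ico s.1 (exists_block ha s.1 s.2.2).choose, a i) - s.2.2)).choose_spec
  exact ⟨h1, h3, (∑ i ∈ Finset.Ico s.1 (exists_block ha s.1 s.2.2).choose, a i) - s.2.2,
    by omega, by omega⟩

noncomputable def braidState (a b : ℕ → ℕ) (ha : (Function.support a).Infinite)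
    (hb : (Function.support b).Infinite) : ℕ → ℕ × ℕ × ℕ
  | 0 => (0, 0, 0)
  | n + 1 => braidStep a b ha hb (braidState a b ha hb n)

lemma natBraided_of_infinite {a b : ℕ → ℕ} (ha : (Function.support a).Infinite)
    (hb : (Function.support b).Infinite) :
    ∃ (I J : ℕ → Finset ℕ) (u v : ℕ → ℕ),
    (∀ μ ν, μ ≠ ν → Disjoint (I μ) (I ν)) ∧ (∀ n, ∃ μ, n ∈ I μ) ∧
    (∀ μ ν, μ ≠ ν → Disjoint (J μ) (J ν)) ∧ (∀ n, ∃ μ, n ∈ J μ) ∧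
    v 0 = 0 ∧
    (∀ μ, ∑ i ∈ I μ, a i = v μ + u μ) ∧
    (∀ μ, ∑ j ∈ J μ, b j = v (μ + 1) + u μ) := by
  classical
  set S := braidState a b ha hb with hS
  have hstep : ∀ μ, S (μ+1) = braidStep a b ha hb (S μ) := fun μ => rfl
  set P : ℕ → ℕ := fun μ => (S μ).1 with hP
  set Q : ℕ → ℕ := fun μ => (S μ).2.1 with hQ
  set V : ℕ → ℕ := fun μ => (S μ).2.2 with hV
  have hspec : ∀ μ, P μ < P (μ+1) ∧ Q μ < Q (μ+1) ∧
      ∃ u, (∑ i ∈ Finset.Ico (P μ) (P (μ+1)), a i = V μ + u) ∧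
        (∑ j ∈ Finset.Ico (Q μ) (Q (μ+1)), b j = V (μ+1) + u) := by
    intro μ
    have := braidStep_spec a b ha hb (S μ)
    rw [← hstep] at this
    exact this
  choose hPlt hQlt U hU1 hU2 using hspec
  have hP0 : P 0 = 0 := rfl
  have hQ0 : Q 0 = 0 := rfl
  have hV0 : V 0 = 0 := rfl
  refine ⟨fun μ => Finset.Ico (P μ) (P (μ+1)), fun μ => Finset.Ico (Q μ) (Q (μ+1)),
    U, V, ?_, ?_, ?_, ?_, hV0, hU1, hU2⟩
  · intro μ ν hne
    have hsm : StrictMono P := strictMono_nat_of_lt_succ hPlt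
    rw [Finset.disjoint_left]
    intro x hx hx'
    rw [Finset.mem_Ico] at hx hx'
    rcases Nat.lt_or_ge μ ν with h | h
    · have : P (μ+1) ≤ P ν := hsm.monotone h; omega
    · have hlt : ν < μ := lt_of_le_of_ne h (Ne.symm hne)
      have : P (ν+1) ≤ P μ := hsm.monotone hlt; omega
  · exact cover_of_strictMono hP0 hPlt
  · intro μ ν hne
    have hsm : StrictMono Q := strictMono_nat_of_lt_succ hQlt
    rw [Finset.disjoint_left]
    intro x hx hx'
    rw [Finset.mem_Ico] at hx hx'
    rcases Nat.lt_or_ge μ ν with h | h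
    · have : Q (μ+1) ≤ Q ν := hsm.monotone h; omega
    · have hlt : ν < μ := lt_of_le_of_ne h (Ne.symm hne)
      have : Q (ν+1) ≤ Q μ := hsm.monotone hlt; omega
  · exact cover_of_strictMono hQ0 hQlt



/-- Two families of natural numbers indexed by `ℕ` (with its standard well-order,
whose only limit element is `0`) are ℵ₀⁻-braided: there are indexed partitions
`(I_μ)`, `(J_μ)` of `ℕ` into finite (possibly empty) blocks and braiding families
`(u_μ)`, `(v_μ)` with `v 0 = 0` such that `Σ_{i∈I_μ} a_i = v_μ + u_μ` and
`Σ_{j∈J_μ} b_j = v_{μ+1} + u_μ` for all `μ`. -/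
def NatBraided (a b : ℕ → ℕ) : Prop :=
  ∃ (I J : ℕ → Finset ℕ) (u v : ℕ → ℕ),
    (∀ μ ν, μ ≠ ν → Disjoint (I μ) (I ν)) ∧ (∀ n, ∃ μ, n ∈ I μ) ∧
    (∀ μ ν, μ ≠ ν → Disjoint (J μ) (J ν)) ∧ (∀ n, ∃ μ, n ∈ J μ) ∧
    v 0 = 0 ∧
    (∀ μ, ∑ i ∈ I μ, a i = v μ + u μ) ∧
    (∀ μ, ∑ j ∈ J μ, b j = v (μ + 1) + u μ)

/-- Example 3.3(1): in `(ℕ, +)`, two families are ℵ₀⁻-braided iff either both have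
finite support and equal sums, or both have infinite support. -/
theorem natBraided_iff (a b : ℕ → ℕ) :
    NatBraided a b ↔
      ((Function.support a).Finite ∧ (Function.support b).Finite ∧
        ∑ᶠ i, a i = ∑ᶠ i, b i) ∨
      ((Function.support a).Infinite ∧ (Function.support b).Infinite) := by
  classical
  constructor
  · rintro ⟨I, J, u, v, hIdis, hIcov, hJdis, hJcov, hv0, hA, hB⟩
    -- if a has finite support, so does b (and vice versa)
    have hab : (Function.support a).Finite → (Function.support b).Finite ∧
        ∑ᶠ i, a i = ∑ᶠ i, b i := by
      intro hfa
      obtain ⟨N, hN⟩ := blocks_eventually_zero hfa I hIdis hIcov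
      have hvu : ∀ μ, N ≤ μ → v μ = 0 ∧ u μ = 0 := by
        intro μ hμ
        have := hA μ
        rw [hN μ hμ] at this
        omega
      have hNb : ∀ μ, N ≤ μ → ∑ j ∈ J μ, b j = 0 := by
        intro μ hμ
        rw [hB μ, (hvu (μ+1) (by omega)).1, (hvu μ hμ).2]
      obtain ⟨hfb, hsb⟩ := finsum_blocks J hJdis hJcov hNb
      obtain ⟨hfa', hsa⟩ := finsum_blocks I hIdis hIcov hN
      refine ⟨hfb, ?_⟩
      rw [hsa, hsb]
      have h1 : ∑ μ ∈ Finset.range N, ∑ i ∈ I μ, a i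
          = ∑ μ ∈ Finset.range N, v μ + ∑ μ ∈ Finset.range N, u μ := by
        rw [← Finset.sum_add_distrib]
        exact Finset.sum_congr rfl fun μ _ => hA μ
      have h2 : ∑ μ ∈ Finset.range N, ∑ j ∈ J μ, b j
          = ∑ μ ∈ Finset.range N, v (μ+1) + ∑ μ ∈ Finset.range N, u μ := by
        rw [← Finset.sum_add_distrib]
        exact Finset.sum_congr rfl fun μ _ => hB μ
      have h3 : ∑ μ ∈ Finset.range N, v (μ+1) = ∑ μ ∈ Finset.range N, v μ := by
        have e1 := Finset.sum_range_succ' v N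
        have e2 := Finset.sum_range_succ v N
        have hvN : v N = 0 := (hvu N le_rfl).1
        omega
      omega
    have hba : (Function.support b).Finite → (Function.support a).Finite := by
      intro hfb
      obtain ⟨N, hN⟩ := blocks_eventually_zero hfb J hJdis hJcov
      have hvu : ∀ μ, N ≤ μ → u μ = 0 ∧ v (μ+1) = 0 := by
        intro μ hμ
        have := hB μ
        rw [hN μ hμ] at this
        omega
      have hNa : ∀ μ, N + 1 ≤ μ → ∑ i ∈ I μ, a i = 0 := by
        intro μ hμ
        rw [hA μ, (hvu μ (by omega)).1]
        obtain ⟨ν, rfl⟩ : ∃ ν, μ = ν + 1 := ⟨μ - 1, by omega⟩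
        rw [(hvu ν (by omega)).2]
      exact (finsum_blocks I hIdis hIcov hNa).1
    rcases Set.finite_or_infinite (Function.support a) with hfa | hia
    · exact Or.inl ⟨hfa, (hab hfa).1, (hab hfa).2⟩
    · refine Or.inr ⟨hia, ?_⟩
      intro hfb
      exact hia (hba hfb)
  · rintro (⟨hfa, hfb, hsum⟩ | ⟨ha, hb⟩)
    · -- finite case
      obtain ⟨M, hM⟩ : ∃ M, ∀ i, M ≤ i → a i = 0 ∧ b i = 0 := by
        obtain ⟨Ma, hMa⟩ := hfa.bddAbove
        obtain ⟨Mb, hMb⟩ := hfb.bddAbove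
        refine ⟨max Ma Mb + 1, fun i hi => ⟨?_, ?_⟩⟩
        · by_contra h
          have := hMa (Function.mem_support.mpr h)
          omega
        · by_contra h
          have := hMb (Function.mem_support.mpr h)
          omega
      set K : ℕ → Finset ℕ := fun μ => match μ with
        | 0 => Finset.range M
        | ν+1 => {M + ν} with hK
      have hKdis : ∀ μ ν, μ ≠ ν → Disjoint (K μ) (K ν) := by
        intro μ ν hne
        rw [Finset.disjoint_left]
        intro x hx hx'
        match μ, ν with
        | 0, 0 => exact hne rfl
        | 0, ν+1 => simp [K] at hx hx'; omega
        | μ+1, 0 => simp [K] at hx hx'; omega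
        | μ+1, ν+1 =>
          simp [K] at hx hx'
          exact hne (by omega)
      have hKcov : ∀ n, ∃ μ, n ∈ K μ := by
        intro n
        rcases Nat.lt_or_ge n M with h | h
        · exact ⟨0, by simp [K, h]⟩
        · refine ⟨n - M + 1, ?_⟩
          simp only [K, Finset.mem_singleton]
          omega
      have hsupa : Function.support a ⊆ ↑(Finset.range M) := by
        intro i hi
        simp only [Finset.coe_range, Set.mem_Iio]
        by_contra h
        exact hi (hM i (le_of_not_gt h)).1
      have hsupb : Function.support b ⊆ ↑(Finset.range M) := by
        intro i hi
        simp only [Finset.coe_range, Set.mem_Iio]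
        by_contra h
        exact hi (hM i (le_of_not_gt h)).2
      refine ⟨K, K, fun μ => if μ = 0 then ∑ᶠ i, a i else 0, fun _ => 0,
        hKdis, hKcov, hKdis, hKcov, rfl, ?_, ?_⟩
      · intro μ
        match μ with
        | 0 =>
          simp only [K, if_pos rfl, zero_add]
          exact (finsum_eq_sum_of_support_subset a hsupa).symm
        | ν+1 => simp [K, (hM (M+ν) (by omega)).1]
      · intro μ
        match μ with
        | 0 =>
          simpa [K, hsum] using (finsum_eq_sum_of_support_subset b hsupb).symm
        | ν+1 => simp [K, (hM (M+ν) (by omega)).2]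
    · exact natBraided_of_infinite ha hb
end

section
/- Let X be a λ⁻-monoid with λ a regular cardinal, λ ≤ κ⁺. If two families (x_i)_{i∈κ} and (y_j)_{j∈κ} in X, regarded inside a κ-monoid H containing X, are λ⁻-braided, then Σ_{i∈κ} x_i = Σ_{j∈κ} y_j in H. -/
open scoped Classical

universe u v w

/-- A limit element of the well-order (the minimum counts as a limit element). -/
def IsLimitElt {ι : Type u} [Preorder ι] [SuccOrder ι] (μ : ι) : Prop :=
  ¬ ∃ ν, ν < μ ∧ Order.succ ν = μ

/-- An indexed partition of the index set `ι` (blocks may be empty). -/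
def IsIndexedPartition {ι : Type u} (I : ι → Set ι) : Prop :=
  (∀ μ ν, μ ≠ ν → Disjoint (I μ) (I ν)) ∧ (⋃ μ, I μ) = Set.univ

namespace KappaMonoid
variable {ι : Type u} {H : Type v}

/-- Definition 3.1(1): the families `x` and `y`, with entries in the λ⁻-submonoid
`X ⊆ H`, are λ⁻-braided: there are indexed partitions `(I_μ)`, `(J_μ)` of `ι` with
blocks of cardinality `< λ` and braiding families `(u_μ)`, `(v_μ)` in `X` with
`v_μ = 0` at limit elements, such that `Σ_{i∈I_μ} x_i = v_μ + u_μ` and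
`Σ_{j∈J_μ} y_j = v_{μ+1} + u_μ` for all `μ`. -/
noncomputable def Braided [Infinite ι] [LinearOrder ι] [SuccOrder ι]
    (M : KappaMonoid ι H) (lam : Cardinal.{u}) (X : Set H) (x y : ι → H) : Prop :=
  ∃ (I J : ι → Set ι) (u v : ι → H),
    IsIndexedPartition I ∧ IsIndexedPartition J ∧
    (∀ μ, Cardinal.mk (I μ) < lam) ∧ (∀ μ, Cardinal.mk (J μ) < lam) ∧
    (∀ μ, u μ ∈ X) ∧ (∀ μ, v μ ∈ X) ∧
    (∀ μ, IsLimitElt μ → v μ = M.zero) ∧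
    (∀ μ, M.sumOn (I μ) x = M.add (v μ) (u μ)) ∧
    (∀ μ, M.sumOn (J μ) y = M.add (v (Order.succ μ)) (u μ))

/-- `X` is a λ⁻-submonoid of the κ-monoid `H`: it contains `0` and is closed under
sums of families with support of cardinality `< λ`. -/
def IsSubmonoidLT (M : KappaMonoid ι H) (lam : Cardinal.{u}) (X : Set H) : Prop :=
  M.zero ∈ X ∧ ∀ x : ι → H, (∀ i, x i ∈ X) →
    Cardinal.mk {i | x i ≠ M.zero} < lam → M.sum x ∈ X

/-- Definition 3.1(2): the κ-monoid `H` is λ⁻-braided over `X`: `X` generates `H`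
as a κ-monoid, and any two κ-indexed families in `X` with equal κ-sums are
λ⁻-braided. -/
noncomputable def BraidedOver [Infinite ι] [LinearOrder ι] [SuccOrder ι]
    (M : KappaMonoid ι H) (lam : Cardinal.{u}) (X : Set H) : Prop :=
  (∀ h : H, ∃ x : ι → H, (∀ i, x i ∈ X) ∧ M.sum x = h) ∧
  ∀ x y : ι → H, (∀ i, x i ∈ X) → (∀ i, y i ∈ X) →
    M.sum x = M.sum y → M.Braided lam X x y

end KappaMonoid

namespace KappaMonoid
variable {ι : Type u} {H : Type v}

lemma nonempty_prod_equiv [Infinite ι] : Nonempty (ι × ι ≃ ι) := by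
  rw [← Cardinal.eq, Cardinal.mk_prod, Cardinal.lift_id]
  exact Cardinal.mul_eq_self (Cardinal.aleph0_le_mk ι)

lemma sum_perm [Infinite ι] (M : KappaMonoid ι H) (σ : ι ≃ ι) (x : ι → H) :
    M.sum (fun i => x (σ i)) = M.sum x := by
  obtain ⟨π₁⟩ := nonempty_prod_equiv (ι := ι)
  have h1 := M.sum_flatten (fun p => x (π₁ p)) π₁
  have h2 := M.sum_flatten (fun p => x (π₁ p)) ((σ.trans π₁.symm).symm)
  simp only [Equiv.symm_symm, Equiv.trans_apply, Equiv.apply_symm_apply] at h1 h2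
  exact h2.symm.trans h1

lemma sum_congr_zero_ext [Infinite ι] (M : KappaMonoid ι H) (z w : ι → H) (s t : Set ι)
    (e : s ≃ t) (hzw : ∀ k : s, z k = w (e k))
    (hz : ∀ k, k ∉ s → z k = M.zero) (hw : ∀ k, k ∉ t → w k = M.zero)
    (hcard : Cardinal.mk ↥(sᶜ) = Cardinal.mk ↥(tᶜ)) :
    M.sum z = M.sum w := by
  obtain ⟨e'⟩ := Cardinal.eq.mp hcard
  set σ : ι ≃ ι := (Equiv.Set.sumCompl s).symm.trans ((e.sumCongr e').trans
    (Equiv.Set.sumCompl t)) with hσ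
  have key : ∀ i, z i = w (σ i) := by
    intro i
    by_cases hi : i ∈ s
    · have : σ i = (e ⟨i, hi⟩ : ι) := by
        simp [hσ, Equiv.Set.sumCompl_symm_apply_of_mem hi]
      rw [this]; exact hzw ⟨i, hi⟩
    · have hmem : (σ i : ι) ∉ t := by
        have : σ i = (e' ⟨i, hi⟩ : ι) := by
          simp [hσ, Equiv.Set.sumCompl_symm_apply_of_notMem hi]
        rw [this]
        exact (e' ⟨i, hi⟩).2
      rw [hz i hi, hw _ hmem]
  calc M.sum z = M.sum (fun i => w (σ i)) := congrArg M.sum (funext key)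
    _ = M.sum w := M.sum_perm σ w

lemma mk_eq_mk_of_inj [Infinite ι] {A : Set ι} (f : ι → ι) (hf : Function.Injective f)
    (hr : ∀ i, f i ∈ A) : Cardinal.mk ↥A = Cardinal.mk ι :=
  le_antisymm (Cardinal.mk_set_le A)
    (Cardinal.mk_le_of_injective (f := fun i => (⟨f i, hr i⟩ : A))
      (fun _ _ h => hf (congrArg Subtype.val h)))

lemma sum_eq_col (M : KappaMonoid ι H) (π : ι × ι ≃ ι) (x : ι → H) :
    M.sum x = M.sum (fun k => if (π.symm k).2 = M.base then x (π.symm k).1 else M.zero) := by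
  have h := M.sum_flatten (fun p => if p.2 = M.base then x p.1 else M.zero) π
  have hin : ∀ i, (M.sum fun j => if j = M.base then x i else M.zero) = x i := by
    intro i
    rw [M.sum_single]
    · simp
    · intro j hj; simp [hj]
  calc M.sum x = M.sum (fun i => M.sum fun j => if j = M.base then x i else M.zero) :=
        congrArg M.sum (funext fun i => (hin i).symm)
    _ = _ := h

lemma sum_partition [Infinite ι] (M : KappaMonoid ι H) {I : ι → Set ι}
    (hI : IsIndexedPartition I) (x : ι → H) :
    M.sum (fun μ => M.sumOn (I μ) x) = M.sum x := by
  obtain ⟨π₀⟩ := nonempty_prod_equiv (ι := ι)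
  have hex : ∀ i, ∃ μ, i ∈ I μ := by
    intro i
    have h1 : i ∈ ⋃ μ, I μ := by rw [hI.2]; trivial
    simpa using h1
  have huniq : ∀ {μ ν i}, i ∈ I μ → i ∈ I ν → μ = ν := by
    intro μ ν i hμ hν
    by_contra hne
    exact Set.disjoint_left.mp (hI.1 μ ν hne) hμ hν
  have h2 := M.sum_flatten (fun p => if p.2 ∈ I p.1 then x p.2 else M.zero) π₀
  set z : ι → H := fun k =>
    if (π₀.symm k).2 ∈ I (π₀.symm k).1 then x (π₀.symm k).2 else M.zero with hzdef
  set w : ι → H := fun k =>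
    if (π₀.symm k).2 = M.base then x (π₀.symm k).1 else M.zero with hwdef
  have key : M.sum z = M.sum w := by
    set s : Set ι := {k | (π₀.symm k).2 ∈ I (π₀.symm k).1} with hs
    set t : Set ι := {k | (π₀.symm k).2 = M.base} with ht
    have hmemt : ∀ k : s, π₀ ((π₀.symm (k:ι)).2, M.base) ∈ t := by
      intro k
      show (π₀.symm (π₀ ((π₀.symm (k:ι)).2, M.base))).2 = M.base
      rw [Equiv.symm_apply_apply]
    set f : s → t := fun k => ⟨π₀ ((π₀.symm (k:ι)).2, M.base), hmemt k⟩ with hfdef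
    have hinj : Function.Injective f := by
      intro a b hab
      have hval : π₀ ((π₀.symm (a:ι)).2, M.base) = π₀ ((π₀.symm (b:ι)).2, M.base) :=
        congrArg Subtype.val hab
      have h1 : (π₀.symm (a:ι)).2 = (π₀.symm (b:ι)).2 :=
        congrArg Prod.fst (π₀.injective hval)
      have ha : (π₀.symm (a:ι)).2 ∈ I (π₀.symm (a:ι)).1 := a.2
      have hb : (π₀.symm (b:ι)).2 ∈ I (π₀.symm (b:ι)).1 := b.2
      have hb' : (π₀.symm (a:ι)).2 ∈ I (π₀.symm (b:ι)).1 := h1 ▸ hb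
      have h2' : (π₀.symm (a:ι)).1 = (π₀.symm (b:ι)).1 := huniq ha hb'
      have : π₀.symm (a:ι) = π₀.symm (b:ι) := Prod.ext h2' h1
      exact Subtype.ext (π₀.symm.injective this)
    have hsurj : Function.Surjective f := by
      rintro ⟨m, hm⟩
      obtain ⟨μ, hμ⟩ := hex (π₀.symm m).1
      have hks : π₀ (μ, (π₀.symm m).1) ∈ s := by
        show (π₀.symm (π₀ (μ, (π₀.symm m).1))).2 ∈ I (π₀.symm (π₀ (μ, (π₀.symm m).1))).1
        rw [Equiv.symm_apply_apply]
        exact hμ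
      refine ⟨⟨π₀ (μ, (π₀.symm m).1), hks⟩, Subtype.ext ?_⟩
      show π₀ ((π₀.symm (π₀ (μ, (π₀.symm m).1))).2, M.base) = m
      rw [Equiv.symm_apply_apply]
      have hpair : π₀.symm m = ((π₀.symm m).1, M.base) := Prod.ext rfl hm
      conv_rhs => rw [← Equiv.apply_symm_apply π₀ m, hpair]
    have hzw : ∀ k : s, z k = w ((Equiv.ofBijective f ⟨hinj, hsurj⟩) k) := by
      intro k
      show z k = w (π₀ ((π₀.symm (k:ι)).2, M.base))
      have hk : (π₀.symm (k:ι)).2 ∈ I (π₀.symm (k:ι)).1 := k.2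
      show (if (π₀.symm (k:ι)).2 ∈ I (π₀.symm (k:ι)).1 then x (π₀.symm (k:ι)).2 else M.zero)
        = (if (π₀.symm (π₀ ((π₀.symm (k:ι)).2, M.base))).2 = M.base
            then x (π₀.symm (π₀ ((π₀.symm (k:ι)).2, M.base))).1 else M.zero)
      rw [Equiv.symm_apply_apply, if_pos hk, if_pos rfl]
    have hz0 : ∀ k, k ∉ s → z k = M.zero := fun k hk => if_neg hk
    have hw0 : ∀ k, k ∉ t → w k = M.zero := fun k hk => if_neg hk
    have hcard : Cardinal.mk ↥(sᶜ) = Cardinal.mk ↥(tᶜ) := by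
      obtain ⟨i₀⟩ : Nonempty ι := inferInstance
      obtain ⟨μ₀, hμ₀⟩ := hex i₀
      have hone : Cardinal.mk ↥({μ₀} : Set ι) < Cardinal.mk ι := by
        rw [Cardinal.mk_singleton]
        exact lt_of_lt_of_le Cardinal.one_lt_aleph0 (Cardinal.aleph0_le_mk ι)
      have hcompl : Cardinal.mk ↥(({μ₀} : Set ι)ᶜ) = Cardinal.mk ι :=
        Cardinal.mk_compl_of_infinite _ hone
      obtain ⟨g⟩ := Cardinal.eq.mp hcompl.symm
      have hscard : Cardinal.mk ↥(sᶜ) = Cardinal.mk ι := by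
        refine mk_eq_mk_of_inj (fun ν => π₀ ((g ν : ι), i₀)) ?_ ?_
        · intro a b hab
          have h3 := π₀.injective hab
          have h4 : (g a : ι) = (g b : ι) := congrArg Prod.fst h3
          exact g.injective (Subtype.ext h4)
        · intro ν
          have hne : (g ν : ι) ≠ μ₀ := by
            have h3 := (g ν).2
            simp only [Set.mem_compl_iff, Set.mem_singleton_iff] at h3
            exact h3
          show ¬ ((π₀.symm (π₀ ((g ν : ι), i₀))).2 ∈ I (π₀.symm (π₀ ((g ν : ι), i₀))).1)
          rw [Equiv.symm_apply_apply]
          intro hmem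
          exact hne (huniq hmem hμ₀)
      have htcard : Cardinal.mk ↥(tᶜ) = Cardinal.mk ι := by
        obtain ⟨c, hc⟩ := exists_ne M.base
        refine mk_eq_mk_of_inj (fun i => π₀ (i, c)) ?_ ?_
        · intro a b hab
          exact congrArg Prod.fst (π₀.injective hab)
        · intro i
          show ¬ ((π₀.symm (π₀ (i, c))).2 = M.base)
          rw [Equiv.symm_apply_apply]
          exact hc
      rw [hscard, htcard]
    exact M.sum_congr_zero_ext z w s t (Equiv.ofBijective f ⟨hinj, hsurj⟩) hzw hz0 hw0 hcard
  calc M.sum (fun μ => M.sumOn (I μ) x)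
      = M.sum (fun μ => M.sum fun i => if (μ, i).2 ∈ I (μ, i).1 then x (μ, i).2 else M.zero) :=
        rfl
    _ = M.sum z := h2
    _ = M.sum w := key
    _ = M.sum x := (M.sum_eq_col π₀ x).symm

lemma sum_braid [Infinite ι] [LinearOrder ι] [SuccOrder ι] [NoMaxOrder ι]
    (M : KappaMonoid ι H) (u v : ι → H)
    (hv0 : ∀ μ, IsLimitElt μ → v μ = M.zero) :
    M.sum (fun μ => M.add (v (Order.succ μ)) (u μ)) = M.sum (fun μ => M.add (v μ) (u μ)) := by
  obtain ⟨π₀⟩ := nonempty_prod_equiv (ι := ι)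
  set c : ι := Classical.choose (exists_ne M.base) with hcdef
  have hc : c ≠ M.base := Classical.choose_spec (exists_ne M.base)
  have hG := M.sum_flatten (fun p => M.pairFam M.base c (v (Order.succ p.1)) (u p.1) p.2) π₀
  have hF := M.sum_flatten (fun p => M.pairFam M.base c (v p.1) (u p.1) p.2) π₀
  set z : ι → H := fun k =>
    M.pairFam M.base c (v (Order.succ (π₀.symm k).1)) (u (π₀.symm k).1) (π₀.symm k).2 with hzdef
  set w : ι → H := fun k =>
    M.pairFam M.base c (v (π₀.symm k).1) (u (π₀.symm k).1) (π₀.symm k).2 with hwdef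
  have key : M.sum z = M.sum w := by
    set s : Set ι := {k | (π₀.symm k).2 = M.base ∨ (π₀.symm k).2 = c} with hs
    set t : Set ι := {k | ((π₀.symm k).2 = M.base ∧ ¬ IsLimitElt (π₀.symm k).1)
      ∨ (π₀.symm k).2 = c} with ht
    have hmemt : ∀ k : s, (if (π₀.symm (k:ι)).2 = M.base
        then π₀ (Order.succ (π₀.symm (k:ι)).1, M.base) else (k:ι)) ∈ t := by
      intro k
      by_cases h : (π₀.symm (k:ι)).2 = M.base
      · rw [if_pos h]
        left
        rw [Equiv.symm_apply_apply]
        refine ⟨rfl, not_not.mpr ⟨(π₀.symm (k:ι)).1, Order.lt_succ _, rfl⟩⟩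
      · rw [if_neg h]
        right
        exact k.2.resolve_left h
    set f : s → t := fun k => ⟨_, hmemt k⟩ with hfdef
    have hinj : Function.Injective f := by
      intro a b hab
      have hval := congrArg Subtype.val hab
      simp only [hfdef] at hval
      by_cases hA : (π₀.symm (a:ι)).2 = M.base <;> by_cases hB : (π₀.symm (b:ι)).2 = M.base
      · rw [if_pos hA, if_pos hB] at hval
        have h3 := π₀.injective hval
        have h4 : (π₀.symm (a:ι)).1 = (π₀.symm (b:ι)).1 :=
          Order.succ_injective (congrArg Prod.fst h3)
        have : π₀.symm (a:ι) = π₀.symm (b:ι) := Prod.ext h4 (hA.trans hB.symm)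
        exact Subtype.ext (π₀.symm.injective this)
      · rw [if_pos hA, if_neg hB] at hval
        exfalso
        have hBc : (π₀.symm (b:ι)).2 = c := b.2.resolve_left hB
        have : (π₀.symm (b:ι)).2 = M.base := by
          rw [← hval, Equiv.symm_apply_apply]
        exact hc (hBc ▸ this)
      · rw [if_neg hA, if_pos hB] at hval
        exfalso
        have hAc : (π₀.symm (a:ι)).2 = c := a.2.resolve_left hA
        have : (π₀.symm (a:ι)).2 = M.base := by
          rw [hval, Equiv.symm_apply_apply]
        exact hc (hAc ▸ this)
      · rw [if_neg hA, if_neg hB] at hval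
        exact Subtype.ext hval
    have hsurj : Function.Surjective f := by
      rintro ⟨m, hm⟩
      rcases hm with ⟨hbase, hnl⟩ | hcm
      · obtain ⟨μ, _, hsucc⟩ := not_not.mp hnl
        have hks : π₀ (μ, M.base) ∈ s := by
          left
          rw [Equiv.symm_apply_apply]
        refine ⟨⟨π₀ (μ, M.base), hks⟩, Subtype.ext ?_⟩
        simp only [hfdef]
        rw [if_pos (by rw [Equiv.symm_apply_apply])]
        have hpair : π₀.symm m = ((π₀.symm m).1, M.base) := Prod.ext rfl hbase
        conv_rhs => rw [← Equiv.apply_symm_apply π₀ m, hpair]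
        rw [Equiv.symm_apply_apply, hsucc]
      · have hnb : ¬ ((π₀.symm m).2 = M.base) := fun h => hc (hcm ▸ h)
        refine ⟨⟨m, Or.inr hcm⟩, Subtype.ext ?_⟩
        simp only [hfdef]
        rw [if_neg hnb]
    have hzw : ∀ k : s, z k = w ((Equiv.ofBijective f ⟨hinj, hsurj⟩) k) := by
      intro k
      show z k = w (if (π₀.symm (k:ι)).2 = M.base
        then π₀ (Order.succ (π₀.symm (k:ι)).1, M.base) else (k:ι))
      by_cases h : (π₀.symm (k:ι)).2 = M.base
      · rw [if_pos h]
        simp [hzdef, hwdef, pairFam, h]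
      · rw [if_neg h]
        have hck : (π₀.symm (k:ι)).2 = c := k.2.resolve_left h
        simp [hzdef, hwdef, pairFam, hck, hc]
    have hz0 : ∀ k, k ∉ s → z k = M.zero := by
      intro k hk
      have h1 : ¬ ((π₀.symm k).2 = M.base ∨ (π₀.symm k).2 = c) := hk
      push_neg at h1
      show M.pairFam M.base c _ _ (π₀.symm k).2 = M.zero
      unfold pairFam
      rw [if_neg h1.1, if_neg h1.2]
    have hw0 : ∀ k, k ∉ t → w k = M.zero := by
      intro k hk
      have h1 : ¬ (((π₀.symm k).2 = M.base ∧ ¬ IsLimitElt (π₀.symm k).1)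
          ∨ (π₀.symm k).2 = c) := hk
      push_neg at h1
      obtain ⟨h2, h3⟩ := h1
      show M.pairFam M.base c (v (π₀.symm k).1) _ (π₀.symm k).2 = M.zero
      by_cases hb : (π₀.symm k).2 = M.base
      · have hlim : IsLimitElt (π₀.symm k).1 := h2 hb
        unfold pairFam
        rw [if_pos hb]
        exact hv0 _ hlim
      · unfold pairFam
        rw [if_neg hb, if_neg h3]
    have hcard : Cardinal.mk ↥(sᶜ) = Cardinal.mk ↥(tᶜ) := by
      have hfin : ({M.base, c} : Set ι).Finite := (Set.finite_singleton c).insert M.base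
      obtain ⟨d, hd⟩ := hfin.infinite_compl.nonempty
      simp only [Set.mem_compl_iff, Set.mem_insert_iff, Set.mem_singleton_iff, not_or] at hd
      have hscard : Cardinal.mk ↥(sᶜ) = Cardinal.mk ι := by
        refine mk_eq_mk_of_inj (fun i => π₀ (i, d)) ?_ ?_
        · intro a b hab
          exact congrArg Prod.fst (π₀.injective hab)
        · intro i
          show ¬ ((π₀.symm (π₀ (i, d))).2 = M.base ∨ (π₀.symm (π₀ (i, d))).2 = c)
          rw [Equiv.symm_apply_apply]
          push_neg
          exact hd
      have htcard : Cardinal.mk ↥(tᶜ) = Cardinal.mk ι := by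
        refine mk_eq_mk_of_inj (fun i => π₀ (i, d)) ?_ ?_
        · intro a b hab
          exact congrArg Prod.fst (π₀.injective hab)
        · intro i
          show ¬ (((π₀.symm (π₀ (i, d))).2 = M.base ∧ _) ∨ (π₀.symm (π₀ (i, d))).2 = c)
          rw [Equiv.symm_apply_apply]
          push_neg
          exact ⟨fun h => absurd h hd.1, hd.2⟩
      rw [hscard, htcard]
    exact M.sum_congr_zero_ext z w s t (Equiv.ofBijective f ⟨hinj, hsurj⟩) hzw hz0 hw0 hcard
  calc M.sum (fun μ => M.add (v (Order.succ μ)) (u μ))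
      = M.sum (fun μ => M.sum fun j =>
          M.pairFam M.base c (v (Order.succ (μ, j).1)) (u (μ, j).1) (μ, j).2) := rfl
    _ = M.sum z := hG
    _ = M.sum w := key
    _ = M.sum (fun μ => M.add (v μ) (u μ)) := hF.symm

end KappaMonoid

/-- Lemma 3.4 (telescoping): λ⁻-braided families have equal κ-sums.  Here `λ ≤ κ⁺`
is regular, `ι` carries a limit well-order (a well-order in which every element has a
successor), and `X ⊆ H` is a λ⁻-submonoid containing the two families. -/
theorem braided_sum_eq {ι : Type u} {H : Type v} [Infinite ι] [LinearOrder ι]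
    [SuccOrder ι] [NoMaxOrder ι] [WellFoundedLT ι]
    (M : KappaMonoid ι H) (lam : Cardinal.{u}) (hreg : lam.IsRegular)
    (hlam : lam ≤ Order.succ (Cardinal.mk ι))
    (X : Set H) (hX : M.IsSubmonoidLT lam X)
    (x y : ι → H) (hx : ∀ i, x i ∈ X) (hy : ∀ i, y i ∈ X)
    (hbr : M.Braided lam X x y) :
    M.sum x = M.sum y := by
  obtain ⟨I, J, u, v, hIpart, hJpart, -, -, -, -, hv0, hIsum, hJsum⟩ := hbr
  calc M.sum x
      = M.sum (fun μ => M.sumOn (I μ) x) := (M.sum_partition hIpart x).symm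
    _ = M.sum (fun μ => M.add (v μ) (u μ)) := congrArg M.sum (funext hIsum)
    _ = M.sum (fun μ => M.add (v (Order.succ μ)) (u μ)) := (M.sum_braid u v hv0).symm
    _ = M.sum (fun μ => M.sumOn (J μ) y) := (congrArg M.sum (funext hJsum)).symm
    _ = M.sum y := M.sum_partition hJpart y
end

section
/- The universal ℵ₀-extension of the monoid (ℕ, +) is ℕ ∪ {∞}, where the ℵ₀-sum of a family of naturals with finite support is the usual sum, and any family with infinite support (or containing ∞) sums to ∞. Equivalently: ℕ ∪ {∞} with this ℵ₀-monoid structure is ℵ₀⁻-braided over ℕ. -/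
open scoped Classical

universe u v w

/-!
The ℵ₀-sum on `ℕ∞` is the topological sum `∑'`; every family is summable, so (A2) is Fubini for
unconditional sums, and a family with infinite support sums to `⊤` because each nonzero term is
at least `1`.

For braiding, let `F` and `G` be the partial sums of two families of naturals with the same total.
Each of them eventually exceeds any natural number below the total, so one can choose cut points
`n 0 < n 1 < ⋯` and `m 0 < m 1 < ⋯` with `F (n μ) ≤ G (m μ) ≤ F (n (μ + 1))`. The finite blocks
between consecutive cut points are then braided by the differences of these partial sums.
-/

open Function Set Filter

namespace ENat

variable {ι : Type*}

protected theorem summable (f : ι → ℕ∞) : Summable f :=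
  ⟨_, hasSum_of_isLUB _ (isLUB_iSup (f := fun s : Finset ι => ∑ i ∈ s, f i))⟩

protected theorem sum_le_tsum {f : ι → ℕ∞} (s : Finset ι) : ∑ i ∈ s, f i ≤ ∑' i, f i :=
  (ENat.summable f).sum_le_tsum s fun _ _ => zero_le

protected theorem tsum_prod' {κ : Type*} (f : ι × κ → ℕ∞) :
    ∑' p, f p = ∑' i, ∑' j, f (i, j) :=
  (ENat.summable f).tsum_prod' fun _ => ENat.summable _

theorem tsum_eq_top_of_support_infinite {f : ι → ℕ∞} (hf : (support f).Infinite) :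
    ∑' i, f i = ⊤ := by
  refine ENat.eq_top_iff_forall_ge.2 fun n => ?_
  obtain ⟨s, hs, rfl⟩ := hf.exists_subset_card_eq n
  calc (s.card : ℕ∞) = ∑ _ ∈ s, 1 := by simp
    _ ≤ ∑ i ∈ s, f i := Finset.sum_le_sum fun i hi => Order.one_le_iff_ne_zero.2 (hs hi)
    _ ≤ ∑' i, f i := ENat.sum_le_tsum s

theorem eventually_le_sum_range {f : ℕ → ℕ∞} {c : ℕ∞} (hc : c ≠ ⊤) (h : c ≤ ∑' i, f i) :
    ∀ᶠ k in atTop, c ≤ ∑ i ∈ Finset.range k, f i := by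
  have hlim := (ENat.summable f).hasSum.tendsto_sum_nat
  rcases h.lt_or_eq with hlt | rfl
  · exact (hlim.eventually_const_lt hlt).mono fun _ => le_of_lt
  · rw [ENat.nhds_eq_pure hc, tendsto_pure] at hlim
    exact hlim.mono fun _ hk => hk.ge

end ENat

noncomputable def tsumKappaMonoid (ι : Type*) (i₀ : ι) : KappaMonoid ι ℕ∞ where
  zero := 0
  base := i₀
  sum x := ∑' i, x i
  sum_single _ hx := tsum_eq_single _ hx
  sum_flatten x π := by
    rw [← ENat.tsum_prod', ← π.symm.tsum_eq]

namespace tsumKappaMonoid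

variable {ι : Type*} (i₀ : ι)

@[simp] theorem zero_eq : (tsumKappaMonoid ι i₀).zero = 0 := rfl

@[simp] theorem base_eq : (tsumKappaMonoid ι i₀).base = i₀ := rfl

@[simp] theorem sum_eq (x : ι → ℕ∞) : (tsumKappaMonoid ι i₀).sum x = ∑' i, x i := rfl

theorem add_eq [Nontrivial ι] (a b : ℕ∞) : (tsumKappaMonoid ι i₀).add a b = a + b := by
  have hne : Classical.choose (exists_ne i₀) ≠ i₀ := Classical.choose_spec (exists_ne i₀)
  rw [KappaMonoid.add, sum_eq, tsum_eq_sum (s := {i₀, Classical.choose (exists_ne i₀)})]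
  · simp [KappaMonoid.pairFam, Finset.sum_pair hne.symm, hne]
  · intro i hi
    simp only [Finset.mem_insert, Finset.mem_singleton, not_or] at hi
    simp [KappaMonoid.pairFam, hi.1, hi.2]

theorem sumOn_coe_finset (s : Finset ι) (x : ι → ℕ∞) :
    (tsumKappaMonoid ι i₀).sumOn s x = ∑ i ∈ s, x i := by
  simp only [KappaMonoid.sumOn, sum_eq, zero_eq, Finset.mem_coe]
  rw [tsum_eq_sum (s := s) fun i hi => if_neg hi]
  exact Finset.sum_congr rfl fun i hi => if_pos hi

end tsumKappaMonoid

theorem exists_interleaving {α : Type*} [Preorder α] {F G : ℕ → α} (h₀ : F 0 ≤ G 0)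
    (hF : ∀ k j, ∃ k', k < k' ∧ G j ≤ F k') (hG : ∀ k j, ∃ k', k < k' ∧ F j ≤ G k') :
    ∃ n m : ℕ → ℕ, n 0 = 0 ∧ m 0 = 0 ∧ StrictMono n ∧ StrictMono m ∧
      ∀ μ, F (n μ) ≤ G (m μ) ∧ G (m μ) ≤ F (n (μ + 1)) := by
  choose φ hφ using hF
  choose ψ hψ using hG
  let step : ℕ × ℕ → ℕ × ℕ := fun p => (φ p.1 p.2, ψ p.2 (φ p.1 p.2))
  let p : ℕ → ℕ × ℕ := fun μ => step^[μ] (0, 0)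
  have hp : ∀ μ, p (μ + 1) = step (p μ) := fun μ => iterate_succ_apply' step μ (0, 0)
  refine ⟨fun μ => (p μ).1, fun μ => (p μ).2, rfl, rfl,
    strictMono_nat_of_lt_succ fun μ => by rw [hp]; exact (hφ _ _).1,
    strictMono_nat_of_lt_succ fun μ => by rw [hp]; exact (hψ _ _).1, fun μ => ⟨?_, ?_⟩⟩
  · cases μ with
    | zero => exact h₀
    | succ μ => dsimp only; rw [hp]; exact (hψ _ _).2
  · dsimp only; rw [hp]; exact (hφ _ _).2

theorem isIndexedPartition_Ico_succ {n : ℕ → ℕ} (hn : StrictMono n) (h₀ : n 0 = 0) :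
    IsIndexedPartition fun μ => Ico (n μ) (n (μ + 1)) := by
  refine ⟨fun μ ν hμν => hn.monotone.pairwise_disjoint_on_Ico_succ hμν, ?_⟩
  have hcover := iUnion_Ico_map_succ_eq_Ici (f := n) (fun μ => hn.monotone (Nat.zero_le μ))
    (not_bddAbove_iff.2 fun b => ⟨n (b + 1), mem_range_self _, b.lt_succ_self.trans_le hn.le_apply⟩)
  simpa [Order.succ_eq_add_one, Nat.bot_eq_zero, h₀] using hcover

theorem Nat.eq_zero_of_isLimitElt {μ : ℕ} (h : IsLimitElt μ) : μ = 0 := by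
  by_contra hμ
  obtain ⟨ν, rfl⟩ := Nat.exists_eq_succ_of_ne_zero hμ
  exact h ⟨ν, ν.lt_succ_self, Order.succ_eq_add_one ν⟩

theorem Finset.sum_Ico_eq_tsub_add_tsub (f : ℕ → ℕ) {a b c : ℕ} (hab : a ≤ b)
    (hac : ∑ i ∈ Finset.range a, f i ≤ c) (hcb : c ≤ ∑ i ∈ Finset.range b, f i) :
    ∑ i ∈ Finset.Ico a b, f i =
      (c - ∑ i ∈ Finset.range a, f i) + (∑ i ∈ Finset.range b, f i - c) := by
  have := Finset.sum_range_add_sum_Ico f hab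
  omega

theorem exists_lt_sum_range_ge_of_tsum_eq {f g : ℕ → ℕ}
    (h : ∑' i, (f i : ℕ∞) = ∑' i, (g i : ℕ∞)) (k j : ℕ) :
    ∃ k', k < k' ∧ ∑ i ∈ Finset.range j, g i ≤ ∑ i ∈ Finset.range k', f i := by
  have hj : ((∑ i ∈ Finset.range j, g i : ℕ) : ℕ∞) ≤ ∑' i, (f i : ℕ∞) := by
    rw [h, Nat.cast_sum]
    exact ENat.sum_le_tsum _
  obtain ⟨k', hle, hgt⟩ :=
    ((ENat.eventually_le_sum_range (ENat.natCast_ne_top _) hj).and (eventually_gt_atTop k)).exists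
  exact ⟨k', hgt, by exact_mod_cast hle⟩

/-- With cut points `F (n μ) ≤ G (m μ) ≤ F (n (μ + 1))`, the braiding terms are
`v μ = G (m μ) - F (n μ)` and `u μ = F (n (μ + 1)) - G (m μ)`. -/
theorem braided_natCast_of_tsum_eq {f g : ℕ → ℕ} (h : ∑' i, (f i : ℕ∞) = ∑' i, (g i : ℕ∞)) :
    (tsumKappaMonoid ℕ 0).Braided Cardinal.aleph0 (range ((↑) : ℕ → ℕ∞))
      (fun i => f i) (fun i => g i) := by
  set F : ℕ → ℕ := fun k => ∑ i ∈ Finset.range k, f i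
  set G : ℕ → ℕ := fun k => ∑ i ∈ Finset.range k, g i
  obtain ⟨n, m, hn₀, hm₀, hn, hm, hFG⟩ := exists_interleaving (F := F) (G := G) le_rfl
    (exists_lt_sum_range_ge_of_tsum_eq h) (exists_lt_sum_range_ge_of_tsum_eq h.symm)
  refine ⟨fun μ => Ico (n μ) (n (μ + 1)), fun μ => Ico (m μ) (m (μ + 1)),
    fun μ => ((F (n (μ + 1)) - G (m μ) : ℕ) : ℕ∞), fun μ => ((G (m μ) - F (n μ) : ℕ) : ℕ∞),
    isIndexedPartition_Ico_succ hn hn₀, isIndexedPartition_Ico_succ hm hm₀,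
    fun _ => (finite_Ico _ _).lt_aleph0, fun _ => (finite_Ico _ _).lt_aleph0,
    fun _ => mem_range_self _, fun _ => mem_range_self _, ?_, fun μ => ?_, fun μ => ?_⟩
  · intro μ hμ
    simp [Nat.eq_zero_of_isLimitElt hμ, hn₀, hm₀, F, G]
  · dsimp only
    rw [← Finset.coe_Ico, tsumKappaMonoid.sumOn_coe_finset, tsumKappaMonoid.add_eq,
      ← Nat.cast_sum, ← Nat.cast_add,
      Finset.sum_Ico_eq_tsub_add_tsub f (hn.monotone (Nat.le_add_right μ 1)) (hFG μ).1 (hFG μ).2]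
  · dsimp only
    rw [← Finset.coe_Ico, tsumKappaMonoid.sumOn_coe_finset, tsumKappaMonoid.add_eq,
      ← Nat.cast_sum, ← Nat.cast_add, Order.succ_eq_add_one,
      Finset.sum_Ico_eq_tsub_add_tsub g (hm.monotone (Nat.le_add_right μ 1)) (hFG μ).2
        (hFG (μ + 1)).1, add_comm]

theorem exists_natCast_family_tsum_eq {ι : Type*} [Infinite ι] (i₀ : ι) (a : ℕ∞) :
    ∃ x : ι → ℕ∞, (∀ i, x i ∈ range ((↑) : ℕ → ℕ∞)) ∧ ∑' i, x i = a := by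
  induction a using ENat.recTopCoe with
  | top =>
    refine ⟨fun _ => (1 : ℕ), fun _ => mem_range_self _, ENat.tsum_eq_top_of_support_infinite ?_⟩
    simpa [support_const] using infinite_univ (α := ι)
  | coe a =>
    refine ⟨fun i => ((Pi.single i₀ a : ι → ℕ) i : ℕ∞), fun _ => mem_range_self _, ?_⟩
    rw [tsum_eq_single i₀ fun i hi => by simp [hi]]
    simp

/-- Example 3.3(1) / Example 3.12: the ℵ₀-monoid `ℕ ∪ {∞}`, in which a countable
family with finite support sums to its usual sum and any family with infinite
support sums to `∞`, is the universal ℵ₀-extension of `(ℕ, +)`: equivalently, it is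
ℵ₀⁻-braided over the submonoid `ℕ` (the range of the coercion `ℕ → ℕ∞`). -/
theorem universal_aleph0_extension_nat :
    ∃ M : KappaMonoid ℕ ℕ∞,
      M.zero = 0 ∧
      (∀ x : ℕ → ℕ∞, (Function.support x).Finite → M.sum x = ∑ᶠ i, x i) ∧
      (∀ x : ℕ → ℕ∞, (Function.support x).Infinite → M.sum x = ⊤) ∧
      M.BraidedOver Cardinal.aleph0 (Set.range ((↑) : ℕ → ℕ∞)) := by
  refine ⟨tsumKappaMonoid ℕ 0, rfl, fun x hx => tsum_eq_finsum hx,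
    fun x hx => ENat.tsum_eq_top_of_support_infinite hx,
    exists_natCast_family_tsum_eq 0, fun x y hx hy hxy => ?_⟩
  choose f hf using hx
  choose g hg using hy
  obtain rfl : (fun i => (f i : ℕ∞)) = x := funext hf
  obtain rfl : (fun i => (g i : ℕ∞)) = y := funext hg
  exact braided_natCast_of_tsum_eq hxy
end
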